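/- arXiv:1307.3963 — 2 statements merged into one kernel-verified Lean document; each statement's English description precedes it below -/
import Mathlib

section
/- Let X_1, X_2, … be i.i.d. real random variables, S_n their partial sums, τ_n = min{0 ≤ k ≤ n : S_k = min(S_0,…,S_n)} (with S_0 = 0), L_m = min(S_1,…,S_m), and ρ ∈ (0,1). Then for every 1 ≤ k ≤ n−1, E[ e^{(1−ρ) S_k + ρ(S_k − S_n)} ; τ_n = k ] = E[ e^{(1−ρ) S_k} ; τ_k = k ] · E[ e^{−ρ S_{n−k}} ; L_{n−k} ≥ 0 ]. -/
/-!
On the event `τ_n = k` the integrand factors as `e^{(1-ρ) S_k} 1{τ_k = k}` times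
`e^{-ρ (S_n - S_k)} 1{S_i ≥ S_k for k ≤ i ≤ n}`. The first factor is a function of the path
`(S_0, …, S_k)`, hence of `X_1, …, X_k`; the second is a function of the walk restarted at time
`k`, `(S_{k+j} - S_k)_{j ≤ n-k}`, hence of `X_{k+1}, …, X_n`. Independence splits the expectation
of the product, and by stationarity of the increments the restarted walk has the law of
`(S_j)_{j ≤ n-k}`, which turns the second expectation into `E[e^{-ρ S_{n-k}}; L_{n-k} ≥ 0]`.
-/

open MeasureTheory ProbabilityTheory Real

theorem ProbabilityTheory.iIndepFun.identDistrib_comp_of_injective {Ω ι κ β : Type*}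
    [MeasurableSpace Ω] [MeasurableSpace β] [Fintype κ] {P : Measure Ω} [IsProbabilityMeasure P]
    {X : ι → Ω → β} (hmeas : ∀ i, Measurable (X i)) (hindep : iIndepFun X P)
    (hident : ∀ i j, P.map (X i) = P.map (X j)) {g h : κ → ι} (hg : g.Injective)
    (hh : h.Injective) :
    IdentDistrib (fun ω j => X (g j) ω) (fun ω j => X (h j) ω) P P where
  aemeasurable_fst := (measurable_pi_lambda _ fun j => hmeas (g j)).aemeasurable
  aemeasurable_snd := (measurable_pi_lambda _ fun j => hmeas (h j)).aemeasurable
  map_eq := by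
    rw [(iIndepFun_iff_map_fun_eq_pi_map fun j => (hmeas (g j)).aemeasurable).1 (hindep.precomp hg),
      (iIndepFun_iff_map_fun_eq_pi_map fun j => (hmeas (h j)).aemeasurable).1 (hindep.precomp hh)]
    congr 1
    ext1 j
    exact hident _ _

theorem sum_fin_filter_val_lt {M : Type*} [AddCommMonoid M] {m : ℕ} (v : ℕ → M)
    (j : Fin (m + 1)) : ∑ i : Fin m with i.val < j.val, v i = ∑ i ∈ Finset.range j, v i := by
  rw [Finset.sum_filter, Fin.sum_univ_eq_sum_range (fun i => if i < (j : ℕ) then v i else 0),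
    ← Finset.sum_filter]
  congr 1
  ext i
  simp only [Finset.mem_filter, Finset.mem_range]
  omega

theorem forall_fin_add_iff {p : ℕ → Prop} {a m : ℕ} :
    (∀ j : Fin (m + 1), p (a + j)) ↔ ∀ i, a ≤ i → i ≤ a + m → p i := by
  refine ⟨fun h i hai him => ?_, fun h j => h _ (Nat.le_add_right a j) (by omega)⟩
  simpa [Nat.add_sub_cancel' hai] using h ⟨i - a, by omega⟩

def partialSums (m : ℕ) (v : Fin m → ℝ) (j : Fin (m + 1)) : ℝ :=
  ∑ i : Fin m with i.val < j.val, v i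

theorem measurable_partialSums (m : ℕ) : Measurable (partialSums m) :=
  measurable_pi_lambda _ fun _ => Finset.measurable_sum _ fun i _ => measurable_pi_apply i

noncomputable def lastStrictMinWeight (c : ℝ) (k : ℕ) : (Fin (k + 1) → ℝ) → ℝ :=
  {w | ∀ i : Fin k, w (Fin.last k) < w i.castSucc}.indicator fun w => exp (c * w (Fin.last k))

noncomputable def nonnegPathWeight (c : ℝ) (m : ℕ) : (Fin (m + 1) → ℝ) → ℝ :=
  {w | ∀ j, 0 ≤ w j}.indicator fun w => exp (c * w (Fin.last m))

theorem measurable_lastStrictMinWeight (c : ℝ) (k : ℕ) : Measurable (lastStrictMinWeight c k) :=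
  .indicator (by fun_prop) (measurableSet_setOfPred.2 (by fun_prop))

theorem measurable_nonnegPathWeight (c : ℝ) (m : ℕ) : Measurable (nonnegPathWeight c m) :=
  .indicator (by fun_prop) (measurableSet_setOfPred.2 (by fun_prop))

section RandomWalk

variable {Ω : Type*} {X S : ℕ → Ω → ℝ}

def restartedWalk (S : ℕ → Ω → ℝ) (a m : ℕ) (ω : Ω) (j : Fin (m + 1)) : ℝ :=
  S (a + j) ω - S a ω

theorem sub_eq_sum_range_of_succ (hSsucc : ∀ m ω, S (m + 1) ω = S m ω + X (m + 1) ω)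
    (a j : ℕ) (ω : Ω) : S (a + j) ω - S a ω = ∑ i ∈ Finset.range j, X (a + i + 1) ω := by
  induction j with
  | zero => simp
  | succ j ih => rw [Finset.sum_range_succ, ← ih, ← add_assoc, hSsucc]; ring

theorem restartedWalk_eq_partialSums_comp (hSsucc : ∀ m ω, S (m + 1) ω = S m ω + X (m + 1) ω)
    (a m : ℕ) :
    restartedWalk S a m = partialSums m ∘ fun ω (i : Fin m) => X (a + i + 1) ω := by
  ext ω j
  rw [restartedWalk, sub_eq_sum_range_of_succ hSsucc]
  exact (sum_fin_filter_val_lt (fun i => X (a + i + 1) ω) j).symm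

theorem lastStrictMinWeight_restartedWalk_zero (hS0 : ∀ ω, S 0 ω = 0) (c : ℝ) (k : ℕ) (ω : Ω) :
    lastStrictMinWeight c k (restartedWalk S 0 k ω) =
      {ω | ∀ i < k, S k ω < S i ω}.indicator (fun ω => exp (c * S k ω)) ω := by
  simp only [lastStrictMinWeight, Set.indicator_apply, Set.mem_ofPred_eq, restartedWalk, hS0,
    zero_add, sub_zero, Fin.val_last, Fin.val_castSucc, Fin.forall_iff]

theorem nonnegPathWeight_restartedWalk (c : ℝ) (a m : ℕ) (ω : Ω) :
    nonnegPathWeight c m (restartedWalk S a m ω) =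
      {ω | ∀ i, a ≤ i → i ≤ a + m → S a ω ≤ S i ω}.indicator
        (fun ω => exp (c * (S (a + m) ω - S a ω))) ω := by
  simp only [nonnegPathWeight, Set.indicator_apply, Set.mem_ofPred_eq, restartedWalk, sub_nonneg,
    Fin.val_last, forall_fin_add_iff (p := fun i => S a ω ≤ S i ω)]

theorem nonnegPathWeight_restartedWalk_zero (hS0 : ∀ ω, S 0 ω = 0) (c : ℝ) (m : ℕ) (ω : Ω) :
    nonnegPathWeight c m (restartedWalk S 0 m ω) =
      {ω | ∀ i, 1 ≤ i → i ≤ m → 0 ≤ S i ω}.indicator (fun ω => exp (c * S m ω)) ω := by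
  have hevent : {ω | ∀ i, 0 ≤ i → i ≤ m → 0 ≤ S i ω} = {ω | ∀ i, 1 ≤ i → i ≤ m → 0 ≤ S i ω} := by
    ext ω
    refine ⟨fun h i _ => h i i.zero_le, fun h i _ him => ?_⟩
    rcases Nat.eq_zero_or_pos i with rfl | hi
    · exact (hS0 ω).ge
    · exact h i hi him
  rw [nonnegPathWeight_restartedWalk]
  simp only [zero_add, hS0, sub_zero]
  rw [hevent]

variable {mΩ : MeasurableSpace Ω}

theorem measurable_walk_of_succ (hmeas : ∀ i, Measurable (X i))
    (hS0 : ∀ ω, S 0 ω = 0) (hSsucc : ∀ m ω, S (m + 1) ω = S m ω + X (m + 1) ω) (j : ℕ) :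
    Measurable (S j) := by
  induction j with
  | zero => simp only [funext hS0, measurable_const]
  | succ j ih => exact funext (hSsucc j) ▸ ih.add (hmeas (j + 1))

theorem measurable_restartedWalk (hSsucc : ∀ m ω, S (m + 1) ω = S m ω + X (m + 1) ω)
    {a m : ℕ} (hX : ∀ i ∈ Set.Ioc a (a + m), Measurable (X i)) :
    Measurable (restartedWalk S a m) := by
  rw [restartedWalk_eq_partialSums_comp hSsucc]
  refine (measurable_partialSums m).comp (measurable_pi_lambda _ fun i => hX _ ?_)
  simp only [Set.mem_Ioc]
  omega

theorem indepFun_restartedWalk {P : Measure Ω} (hmeas : ∀ i, Measurable (X i))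
    (hindep : iIndepFun X P) (hSsucc : ∀ m ω, S (m + 1) ω = S m ω + X (m + 1) ω)
    {a b k m : ℕ} (hab : a + k ≤ b) :
    IndepFun (restartedWalk S a k) (restartedWalk S b m) P := by
  have hX : ∀ (s : Set ℕ), ∀ i ∈ s,
      Measurable[⨆ j ∈ s, MeasurableSpace.comap (X j) inferInstance] (X i) := fun s i hi =>
    (comap_measurable (X i)).mono (le_iSup₂ (f := fun j _ => MeasurableSpace.comap (X j) _) i hi)
      le_rfl
  have hdisj : Disjoint (Set.Ioc a (a + k)) (Set.Ioc b (b + m)) :=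
    Set.disjoint_left.2 fun i hi hi' => by simp only [Set.mem_Ioc] at hi hi'; omega
  rw [IndepFun_iff_Indep]
  exact indep_of_indep_of_le_right (indep_of_indep_of_le_left
    (indep_iSup_of_disjoint (fun i => (hmeas i).comap_le) ((iIndepFun_iff_iIndep _ _ _).1 hindep)
      hdisj)
    (measurable_restartedWalk hSsucc (hX _)).comap_le)
    (measurable_restartedWalk hSsucc (hX _)).comap_le

theorem identDistrib_restartedWalk {P : Measure Ω} [IsProbabilityMeasure P]
    (hmeas : ∀ i, Measurable (X i)) (hindep : iIndepFun X P)
    (hident : ∀ i j, P.map (X i) = P.map (X j))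
    (hSsucc : ∀ m ω, S (m + 1) ω = S m ω + X (m + 1) ω) (a b m : ℕ) :
    IdentDistrib (restartedWalk S a m) (restartedWalk S b m) P P := by
  rw [restartedWalk_eq_partialSums_comp hSsucc, restartedWalk_eq_partialSums_comp hSsucc]
  refine (hindep.identDistrib_comp_of_injective hmeas hident ?_ ?_).comp
    (measurable_partialSums m) <;>
  exact fun i j hij => Fin.ext (by simpa using hij)

end RandomWalk

theorem stmt5_general {Ω : Type*} [MeasurableSpace Ω] (P : Measure Ω) [IsProbabilityMeasure P]
    (X : ℕ → Ω → ℝ) (hmeas : ∀ i, Measurable (X i))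
    (hindep : iIndepFun X P)
    (hident : ∀ i, Measure.map (X i) P = Measure.map (X 1) P)
    (S : ℕ → Ω → ℝ) (hS0 : ∀ ω, S 0 ω = 0)
    (hSsucc : ∀ m ω, S (m + 1) ω = S m ω + X (m + 1) ω)
    (ρ : ℝ) (n k : ℕ) (hkn : k ≤ n - 1) :
    ∫ ω in {ω | (∀ i < k, S k ω < S i ω) ∧ ∀ i, k ≤ i → i ≤ n → S k ω ≤ S i ω},
        exp ((1 - ρ) * S k ω + ρ * (S k ω - S n ω)) ∂P =
      (∫ ω in {ω | ∀ i < k, S k ω < S i ω}, exp ((1 - ρ) * S k ω) ∂P) *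
        ∫ ω in {ω | ∀ i, 1 ≤ i → i ≤ n - k → 0 ≤ S i ω}, exp (-ρ * S (n - k) ω) ∂P := by
  set m := n - k
  have hkm : k + m = n := by omega
  have hS := measurable_walk_of_succ hmeas hS0 hSsucc
  have hR : ∀ a l, Measurable (restartedWalk S a l) := fun _ _ =>
    measurable_restartedWalk hSsucc fun i _ => hmeas i
  have hf := measurable_lastStrictMinWeight (1 - ρ) k
  have hg := measurable_nonnegPathWeight (-ρ) m
  calc _ = ∫ ω, lastStrictMinWeight (1 - ρ) k (restartedWalk S 0 k ω) *
          nonnegPathWeight (-ρ) m (restartedWalk S k m ω) ∂P := by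
        rw [← integral_indicator (by measurability)]
        congr 1; funext ω
        rw [lastStrictMinWeight_restartedWalk_zero hS0, nonnegPathWeight_restartedWalk, hkm,
          ← Set.inter_indicator_mul]
        congr 1; funext ω; rw [← exp_add]; ring_nf
    _ = (∫ ω, lastStrictMinWeight (1 - ρ) k (restartedWalk S 0 k ω) ∂P) *
          ∫ ω, nonnegPathWeight (-ρ) m (restartedWalk S k m ω) ∂P :=
        ((indepFun_restartedWalk hmeas hindep hSsucc (zero_add k).le).comp hf hg
          ).integral_fun_mul_eq_mul_integral
          (hf.comp (hR 0 k)).aestronglyMeasurable (hg.comp (hR k m)).aestronglyMeasurable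
    _ = (∫ ω, lastStrictMinWeight (1 - ρ) k (restartedWalk S 0 k ω) ∂P) *
          ∫ ω, nonnegPathWeight (-ρ) m (restartedWalk S 0 m ω) ∂P := by
        congr 1
        exact ((identDistrib_restartedWalk hmeas hindep
          (fun i j => (hident i).trans (hident j).symm) hSsucc k 0 m).comp hg).integral_eq
    _ = _ := by
        simp only [lastStrictMinWeight_restartedWalk_zero hS0,
          nonnegPathWeight_restartedWalk_zero hS0]
        rw [integral_indicator (by measurability), integral_indicator (by measurability)]

/-- for an i.i.d. random walk `S`, `τ_n` the first time of the minimum of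
`S 0, …, S n`, `L_m = min (S 1, …, S m)` and `ρ ∈ (0,1)`, for `1 ≤ k ≤ n - 1`:
`E[exp ((1-ρ) S k + ρ (S k - S n)); τ_n = k]
  = E[exp ((1-ρ) S k); τ_k = k] * E[exp (-ρ S (n-k)); L_{n-k} ≥ 0]`. -/
theorem stmt5 {Ω : Type*} [MeasurableSpace Ω] (P : Measure Ω) [IsProbabilityMeasure P]
    (X : ℕ → Ω → ℝ) (hmeas : ∀ i, Measurable (X i))
    (hindep : iIndepFun X P)
    (hident : ∀ i, Measure.map (X i) P = Measure.map (X 1) P)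
    (S : ℕ → Ω → ℝ) (hS0 : ∀ ω, S 0 ω = 0)
    (hSsucc : ∀ m ω, S (m + 1) ω = S m ω + X (m + 1) ω)
    (ρ : ℝ) (hρ : ρ ∈ Set.Ioo (0:ℝ) 1) (n k : ℕ) (hk : 1 ≤ k) (hkn : k ≤ n - 1) (hn : 1 ≤ n) :
    ∫ ω in {ω | (∀ i < k, S k ω < S i ω) ∧ ∀ i, k ≤ i → i ≤ n → S k ω ≤ S i ω},
        exp ((1 - ρ) * S k ω + ρ * (S k ω - S n ω)) ∂P =
      (∫ ω in {ω | ∀ i < k, S k ω < S i ω}, exp ((1 - ρ) * S k ω) ∂P) *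
        ∫ ω in {ω | ∀ i, 1 ≤ i → i ≤ n - k → 0 ≤ S i ω}, exp (-ρ * S (n - k) ω) ∂P :=
  stmt5_general P X hmeas hindep hident S hS0 hSsucc ρ n k hkn
end

section
/- Let X_1, X_2, … be i.i.d. real random variables with partial sums S_n, τ_n the first time of the minimum of S_0,…,S_n, and ρ ∈ (0,1). Then for all 1 ≤ j ≤ n, E[ e^{S_{τ_n} − ρ S_n} ; S_{j-1} ≤ −N, X_j ≥ c ] ≤ e^{−(1−ρ)N} P(X_1 ≥ c) for every N ≥ 0 and c ∈ ℝ. -/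
/- The minimum `m = S_{τ_n}` lies below both `S_{j-1} ≤ -N` and `S_n`, so
`m - ρ S_n = (1 - ρ) m - ρ (S_n - m) ≤ (1 - ρ) m ≤ -(1 - ρ) N` on the event. The integrand is thus
bounded by `e^{-(1-ρ)N}`, and the event lies inside `{X_j ≥ c}`, whose probability is that of
`{X_1 ≥ c}` since `X_j` and `X_1` are identically distributed. -/

open MeasureTheory ProbabilityTheory Real

lemma sub_mul_le_neg_mul_of_le {m b N ρ : ℝ} (hρ0 : 0 ≤ ρ) (hρ1 : ρ ≤ 1) (hmN : m ≤ -N)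
    (hmb : m ≤ b) : m - ρ * b ≤ -(1 - ρ) * N :=
  calc m - ρ * b = (1 - ρ) * m - ρ * (b - m) := by ring
    _ ≤ (1 - ρ) * m := sub_le_self _ (mul_nonneg hρ0 (sub_nonneg.2 hmb))
    _ ≤ -(1 - ρ) * N := by nlinarith

lemma setIntegral_exp_le_of_le {α : Type*} [MeasurableSpace α] {μ : Measure α} [IsFiniteMeasure μ]
    {f : α → ℝ} {s : Set α} {a : ℝ} (hf : ∀ x ∈ s, f x ≤ a) :
    ∫ x in s, exp (f x) ∂μ ≤ exp a * μ.real s := by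
  refine (Real.le_norm_self _).trans ?_
  refine norm_setIntegral_le_of_norm_le_const (measure_lt_top μ s) fun x hx => ?_
  rw [norm_of_nonneg (exp_nonneg _)]
  exact exp_le_exp.2 (hf x hx)

/-- for an i.i.d. random walk `S` with minimum value `S_{τ_n} = min_{0≤k≤n} S k`,
`ρ ∈ (0,1)`, `N ≥ 0`, `c ∈ ℝ` and `1 ≤ j ≤ n`,
`E[exp (S_{τ_n} - ρ S n); S (j-1) ≤ -N, X j ≥ c] ≤ exp (-(1-ρ) N) * P(X 1 ≥ c)`. -/
theorem stmt11 {Ω : Type*} [MeasurableSpace Ω] (P : Measure Ω) [IsProbabilityMeasure P]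
    (X : ℕ → Ω → ℝ) (hmeas : ∀ i, Measurable (X i))
    (hident : ∀ i, Measure.map (X i) P = Measure.map (X 1) P)
    (S : ℕ → Ω → ℝ)
    (ρ N c : ℝ) (hρ : ρ ∈ Set.Ioo (0:ℝ) 1)
    (n j : ℕ) (hjn : j ≤ n) :
    ∫ ω in {ω | S (j - 1) ω ≤ -N ∧ c ≤ X j ω},
        exp ((Finset.range (n + 1)).inf' (by simp) (fun k => S k ω) - ρ * S n ω) ∂P ≤
      exp (-(1 - ρ) * N) * (P {ω | c ≤ X 1 ω}).toReal := by
  have hbound : ∀ ω ∈ {ω | S (j - 1) ω ≤ -N ∧ c ≤ X j ω},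
      (Finset.range (n + 1)).inf' (by simp) (fun k => S k ω) - ρ * S n ω ≤ -(1 - ρ) * N :=
    fun ω hω => sub_mul_le_neg_mul_of_le hρ.1.le hρ.2.le
      ((Finset.inf'_le _ (Finset.mem_range.2 (by omega))).trans hω.1)
      (Finset.inf'_le _ (Finset.self_mem_range_succ n))
  have hXj : P {ω | c ≤ X j ω} = P {ω | c ≤ X 1 ω} :=
    IdentDistrib.measure_mem_eq ⟨(hmeas j).aemeasurable, (hmeas 1).aemeasurable, hident j⟩
      measurableSet_Ici
  calc _ ≤ exp (-(1 - ρ) * N) * P.real {ω | S (j - 1) ω ≤ -N ∧ c ≤ X j ω} :=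
        setIntegral_exp_le_of_le hbound
    _ ≤ exp (-(1 - ρ) * N) * (P {ω | c ≤ X 1 ω}).toReal := by
        rw [← hXj, ← measureReal_def]
        exact mul_le_mul_of_nonneg_left (measureReal_mono fun ω hω => hω.2) (exp_nonneg _)
end
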